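/- arXiv:2501.18143 — 2 statements merged into one kernel-verified Lean document; each statement's English description precedes it below -/
import Mathlib

section
/- (Frank–Wolfe convergence, O(1/t), line-search step size.) Let E be a real inner product space, n > 0 a real number, and Ω ⊆ E a nonempty convex set with ‖x − y‖² ≤ 2n for all x, y ∈ Ω. Let f : E → ℝ be convex and differentiable with L-Lipschitz gradient (L > 0), and let F* ∈ Ω satisfy f(F*) ≤ f(P) for all P ∈ Ω. Let F⁰ ∈ Ω satisfy f(F⁰) − f(F*) ≤ (14/3)·n·L. Suppose at each step P^t ∈ Ω satisfies ⟨∇f(F^t), P^t⟩ ≤ ⟨∇f(F^t), P⟩ for all P ∈ Ω, and F^{t+1} = (1 − μ_t)F^t + μ_t P^t for some μ_t ∈ [0,1] chosen so that f(F^{t+1}) ≤ f((1 − μ)F^t + μ P^t) for all μ ∈ [0,1]. Then for every t ≥ 1, f(F^t) − f(F*) ≤ 4nL/(t+1). -/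
open scoped RealInnerProductSpace
open AffineMap Set

/-!
If `p` minimises `⟪∇f(x), ·⟫` over `Ω`, convexity gives `⟪∇f(x), p - x⟫ ≤ f(x⋆) - f(x)`, and the
descent inequality of an `L`-smooth function then shows that the step `x ↦ (1 - ν) x + ν p`
turns the gap `h = f(x) - f(x⋆)` into at most `(1 - ν) h + ν² n L`. The line search does at least
as well as every `ν ∈ [0, 1]`; taking `ν = 1` for the first step and `ν = 2 / (t + 2)` afterwards,
induction gives `h_t ≤ 4 n L / (t + 1)`.
-/

theorem le_four_mul_div_add_one_of_le_one_sub_mul_add_sq_mul {e : ℕ → ℝ} {C : ℝ} (hC : 0 ≤ C)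
    (he : ∀ t, ∀ ν ∈ Icc (0 : ℝ) 1, e (t + 1) ≤ (1 - ν) * e t + ν ^ 2 * C) :
    ∀ t : ℕ, 1 ≤ t → e t ≤ 4 * C / ((t : ℝ) + 1) := by
  intro t ht
  induction t, ht using Nat.le_induction with
  | base =>
    have := he 0 1 ⟨zero_le_one, le_rfl⟩
    norm_num at this ⊢
    linarith
  | succ t _ ih =>
    have hν : 2 / ((t : ℝ) + 2) ∈ Icc (0 : ℝ) 1 :=
      ⟨by positivity, (div_le_one (by positivity)).2 (by linarith)⟩
    have hgap : 4 * C / ((t : ℝ) + 2) - ((1 - 2 / ((t : ℝ) + 2)) * (4 * C / ((t : ℝ) + 1))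
        + (2 / ((t : ℝ) + 2)) ^ 2 * C) = 4 * C / (((t : ℝ) + 1) * ((t : ℝ) + 2) ^ 2) := by
      field_simp
      ring
    calc e (t + 1) ≤ (1 - 2 / ((t : ℝ) + 2)) * e t + (2 / ((t : ℝ) + 2)) ^ 2 * C := he t _ hν
      _ ≤ (1 - 2 / ((t : ℝ) + 2)) * (4 * C / ((t : ℝ) + 1)) + (2 / ((t : ℝ) + 2)) ^ 2 * C := by
          gcongr
          linarith [hν.2]
      _ ≤ 4 * C / ((t : ℝ) + 2) := by
          have : 0 ≤ 4 * C / (((t : ℝ) + 1) * ((t : ℝ) + 2) ^ 2) := by positivity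
          linarith
      _ = 4 * C / (((t + 1 : ℕ) : ℝ) + 1) := by push_cast; ring

section

variable {E : Type*} [NormedAddCommGroup E] [InnerProductSpace ℝ E] [CompleteSpace E]
  {f : E → ℝ} {f' : E → E}

theorem HasGradientAt.hasDerivAt_comp_lineMap {g x y : E} {s : ℝ}
    (h : HasGradientAt f g (lineMap x y s)) :
    HasDerivAt (f ∘ lineMap (k := ℝ) x y) ⟪g, y - x⟫ s := by
  simpa using h.hasFDerivAt.comp_hasDerivAt s hasDerivAt_lineMap

theorem ConvexOn.add_inner_sub_le_of_hasGradientAt {s : Set E} (hfc : ConvexOn ℝ s f)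
    {x y g : E} (hx : x ∈ s) (hy : y ∈ s) (hg : HasGradientAt f g x) :
    f x + ⟪g, y - x⟫ ≤ f y := by
  have hline : ConvexOn ℝ (lineMap x y ⁻¹' s) (f ∘ lineMap (k := ℝ) x y) :=
    hfc.comp_affineMap _
  have hderiv : HasDerivAt (f ∘ lineMap (k := ℝ) x y) ⟪g, y - x⟫ 0 :=
    HasGradientAt.hasDerivAt_comp_lineMap (by simpa using hg)
  have := hline.le_slope_of_hasDerivAt (by simpa using hx) (by simpa using hy) zero_lt_one hderiv
  simp only [slope_def_field, Function.comp_apply, lineMap_apply_one, lineMap_apply_zero,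
    sub_zero, div_one] at this
  linarith

theorem add_inner_sub_add_sq_le_of_lipschitz_gradient {L : ℝ}
    (hf : ∀ x, HasGradientAt f (f' x) x) (hLip : ∀ x y, ‖f' x - f' y‖ ≤ L * ‖x - y‖) (x y : E) :
    f y ≤ f x + ⟪f' x, y - x⟫ + L / 2 * ‖y - x‖ ^ 2 := by
  have hderiv (s : ℝ) : HasDerivAt (f ∘ lineMap (k := ℝ) x y) ⟪f' (lineMap x y s), y - x⟫ s :=
    (hf _).hasDerivAt_comp_lineMap
  have hB (s : ℝ) : HasDerivAt (fun s => f x + s * ⟪f' x, y - x⟫ + L / 2 * ‖y - x‖ ^ 2 * s ^ 2)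
      (⟪f' x, y - x⟫ + L * ‖y - x‖ ^ 2 * s) s :=
    ((((hasDerivAt_id s).mul_const _).const_add _).add
      ((hasDerivAt_pow 2 s).const_mul _)).congr_deriv (by ring)
  have hslope (s : ℝ) (hs : 0 ≤ s) :
      ⟪f' (lineMap x y s), y - x⟫ ≤ ⟪f' x, y - x⟫ + L * ‖y - x‖ ^ 2 * s := by
    have hLs : ‖f' (lineMap x y s) - f' x‖ ≤ L * (s * ‖y - x‖) := by
      simpa [lineMap_apply_module', norm_smul, abs_of_nonneg hs] using hLip (lineMap x y s) x
    calc ⟪f' (lineMap x y s), y - x⟫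
        = ⟪f' x, y - x⟫ + ⟪f' (lineMap x y s) - f' x, y - x⟫ := by rw [inner_sub_left]; ring
      _ ≤ ⟪f' x, y - x⟫ + ‖f' (lineMap x y s) - f' x‖ * ‖y - x‖ := by
          gcongr; exact real_inner_le_norm _ _
      _ ≤ ⟪f' x, y - x⟫ + L * (s * ‖y - x‖) * ‖y - x‖ := by gcongr
      _ = ⟪f' x, y - x⟫ + L * ‖y - x‖ ^ 2 * s := by ring
  have := image_le_of_deriv_right_le_deriv_boundary (a := 0) (b := 1)
    (fun s _ => (hderiv s).continuousAt.continuousWithinAt)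
    (fun s _ => (hderiv s).hasDerivWithinAt) (by simp)
    (fun s _ => (hB s).continuousAt.continuousWithinAt)
    (fun s _ => (hB s).hasDerivWithinAt) (fun s hs => hslope s hs.1) (right_mem_Icc.2 zero_le_one)
  simpa using this

namespace FrankWolfe

theorem gap_step_le {s : Set E} {L D ν : ℝ} (hfc : ConvexOn ℝ s f)
    (hf : ∀ x, HasGradientAt f (f' x) x) (hL : 0 ≤ L)
    (hLip : ∀ x y, ‖f' x - f' y‖ ≤ L * ‖x - y‖) {x p z y : E} (hx : x ∈ s) (hz : z ∈ s)
    (hpmin : ⟪f' x, p⟫ ≤ ⟪f' x, z⟫) (hD : ‖p - x‖ ^ 2 ≤ D) (hν : 0 ≤ ν)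
    (hy : f y ≤ f (lineMap x p ν)) :
    f y - f z ≤ (1 - ν) * (f x - f z) + ν ^ 2 * (L * D / 2) := by
  have hdir : ⟪f' x, p - x⟫ ≤ f z - f x := by
    have := hfc.add_inner_sub_le_of_hasGradientAt hx hz (hf x)
    rw [inner_sub_right] at this ⊢
    linarith
  have hdescent := add_inner_sub_add_sq_le_of_lipschitz_gradient hf hLip x (lineMap x p ν)
  have hdisp : lineMap x p ν - x = ν • (p - x) := lineMap_vsub_left x p ν
  rw [hdisp, inner_smul_right, norm_smul, Real.norm_eq_abs, abs_of_nonneg hν, mul_pow]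
    at hdescent
  have h1 : ν * ⟪f' x, p - x⟫ ≤ ν * (f z - f x) := mul_le_mul_of_nonneg_left hdir hν
  have h2 : L / 2 * (ν ^ 2 * ‖p - x‖ ^ 2) ≤ L / 2 * (ν ^ 2 * D) := by gcongr
  linarith

end FrankWolfe

end

theorem frank_wolfe_rate_line_search_general {E : Type*} [NormedAddCommGroup E]
    [InnerProductSpace ℝ E] [CompleteSpace E]
    (n : ℝ) (hn : 0 < n) (Ω : Set E) (hΩ : Convex ℝ Ω)
    (hdiam : ∀ x ∈ Ω, ∀ y ∈ Ω, ‖x - y‖ ^ 2 ≤ 2 * n)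
    (f : E → ℝ) (f' : E → E)
    (hconv : ConvexOn ℝ Set.univ f) (hf : ∀ x, HasGradientAt f (f' x) x)
    (L : ℝ) (hL : 0 < L) (hLip : ∀ x y, ‖f' x - f' y‖ ≤ L * ‖x - y‖)
    (Fstar : E) (hFstar : Fstar ∈ Ω)
    (F P : ℕ → E) (μ : ℕ → ℝ) (hF0 : F 0 ∈ Ω)
    (hP : ∀ t, P t ∈ Ω)
    (hPmin : ∀ t, ∀ Q ∈ Ω, ⟪f' (F t), P t⟫ ≤ ⟪f' (F t), Q⟫)
    (hμ : ∀ t, μ t ∈ Set.Icc (0 : ℝ) 1)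
    (hupd : ∀ t : ℕ, F (t + 1) = (1 - μ t) • F t + μ t • P t)
    (hline : ∀ t : ℕ, ∀ ν ∈ Set.Icc (0 : ℝ) 1,
      f (F (t + 1)) ≤ f ((1 - ν) • F t + ν • P t)) :
    ∀ t : ℕ, 1 ≤ t → f (F t) - f Fstar ≤ 4 * n * L / ((t : ℝ) + 1) := by
  have hmem : ∀ t, F t ∈ Ω := by
    intro t
    induction t with
    | zero => exact hF0
    | succ t ih =>
      rw [hupd t]
      exact hΩ ih (hP t) (by linarith [(hμ t).2]) (hμ t).1 (by ring)
  simp only [mul_assoc 4 n L]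
  refine le_four_mul_div_add_one_of_le_one_sub_mul_add_sq_mul (by positivity) fun t ν hν => ?_
  have hstep := FrankWolfe.gap_step_le hconv hf hL.le hLip (mem_univ _) (mem_univ _)
    (hPmin t Fstar hFstar) (hdiam _ (hP t) _ (hmem t)) hν.1
    (by simpa only [lineMap_apply_module] using hline t ν hν)
  convert hstep using 3
  ring

/-- Frank–Wolfe convergence at rate `O(1/t)` with the line-search step size. -/
theorem frank_wolfe_rate_line_search {E : Type*} [NormedAddCommGroup E]
    [InnerProductSpace ℝ E] [CompleteSpace E]
    (n : ℝ) (hn : 0 < n) (Ω : Set E) (hne : Ω.Nonempty) (hΩ : Convex ℝ Ω)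
    (hdiam : ∀ x ∈ Ω, ∀ y ∈ Ω, ‖x - y‖ ^ 2 ≤ 2 * n)
    (f : E → ℝ) (f' : E → E)
    (hconv : ConvexOn ℝ Set.univ f) (hf : ∀ x, HasGradientAt f (f' x) x)
    (L : ℝ) (hL : 0 < L) (hLip : ∀ x y, ‖f' x - f' y‖ ≤ L * ‖x - y‖)
    (Fstar : E) (hFstar : Fstar ∈ Ω) (hopt : ∀ P ∈ Ω, f Fstar ≤ f P)
    (F P : ℕ → E) (μ : ℕ → ℝ) (hF0 : F 0 ∈ Ω)
    (hinit : f (F 0) - f Fstar ≤ (14 / 3) * n * L)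
    (hP : ∀ t, P t ∈ Ω)
    (hPmin : ∀ t, ∀ Q ∈ Ω, ⟪f' (F t), P t⟫ ≤ ⟪f' (F t), Q⟫)
    (hμ : ∀ t, μ t ∈ Set.Icc (0 : ℝ) 1)
    (hupd : ∀ t : ℕ, F (t + 1) = (1 - μ t) • F t + μ t • P t)
    (hline : ∀ t : ℕ, ∀ ν ∈ Set.Icc (0 : ℝ) 1,
      f (F (t + 1)) ≤ f ((1 - ν) • F t + ν • P t)) :
    ∀ t : ℕ, 1 ≤ t → f (F t) - f Fstar ≤ 4 * n * L / ((t : ℝ) + 1) :=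
  frank_wolfe_rate_line_search_general n hn Ω hΩ hdiam f f' hconv hf L hL hLip Fstar hFstar F P μ
    hF0 hP hPmin hμ hupd hline
end

section
/- (Frank–Wolfe for nonconvex objectives, O(1/√t) dual-gap rate.) Let E be a real inner product space, n > 0 a real number, and Ω ⊆ E a nonempty convex set with ‖x − y‖² ≤ 2n for all x, y ∈ Ω. Let f : E → ℝ be differentiable with L-Lipschitz gradient (L > 0), and let F* ∈ Ω satisfy f(F*) ≤ f(P) for all P ∈ Ω. Starting from F⁰ ∈ Ω, at each step let P^t ∈ Ω satisfy ⟨∇f(F^t), P^t⟩ ≤ ⟨∇f(F^t), P⟩ for all P ∈ Ω, set g_t = ⟨∇f(F^t), F^t − P^t⟩, μ_t = min(g_t/(2Ln), 1), and F^{t+1} = F^t + μ_t(P^t − F^t). Then for every T ≥ 0, min_{0 ≤ k ≤ T} g_k ≤ max{2(f(F⁰) − f(F*)), 2nL} / √(T+1). -/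
/-!
Along the segment from `x` to `y`, an `L`-Lipschitz gradient makes
`s ↦ f (x + s • (y - x)) - s ⟪∇f x, y - x⟫ - L s² ‖y - x‖² / 2` antitone, which gives the descent
lemma. With curvature constant `C = 2nL ≥ L ‖P - F‖²`, the short step `μ = min (g / C) 1` therefore
decreases `f` by at least `min (g² / 2C) (g / 2)`. Summing over `T + 1` steps, this decrease at the
smallest gap `G` is at most `f F⁰ - f F*` divided by `T + 1`, which forces
`G ≤ max (2 (f F⁰ - f F*)) C / √(T + 1)`.
-/

open scoped RealInnerProductSpace

open Finset

section Smooth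

variable {E : Type*} [NormedAddCommGroup E] [InnerProductSpace ℝ E]
  {f : E → ℝ} {f' : E → E} {L : ℝ}

theorem inner_gradient_sub_le_of_lipschitz (hLip : ∀ x y, ‖f' x - f' y‖ ≤ L * ‖x - y‖)
    (x d : E) {s : ℝ} (hs : 0 ≤ s) : ⟪f' (x + s • d) - f' x, d⟫ ≤ L * s * ‖d‖ ^ 2 :=
  calc ⟪f' (x + s • d) - f' x, d⟫ ≤ ‖f' (x + s • d) - f' x‖ * ‖d‖ := real_inner_le_norm _ _
    _ ≤ L * ‖s • d‖ * ‖d‖ := by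
        gcongr
        simpa using hLip (x + s • d) x
    _ = L * s * ‖d‖ ^ 2 := by rw [norm_smul, Real.norm_of_nonneg hs]; ring

variable [CompleteSpace E]

theorem hasDerivAt_comp_add_smul (hf : ∀ x, HasGradientAt f (f' x) x) (x d : E) (s : ℝ) :
    HasDerivAt (fun s : ℝ => f (x + s • d)) ⟪f' (x + s • d), d⟫ s := by
  have hline : HasDerivAt (fun s : ℝ => x + s • d) d s := by
    simpa using ((hasDerivAt_id s).smul_const d).const_add x
  have h := (hf (x + s • d)).hasFDerivAt.comp_hasDerivAt s hline
  simp only [InnerProductSpace.toDual_apply_apply] at h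
  exact h

theorem le_add_inner_add_of_lipschitz_gradient (hf : ∀ x, HasGradientAt f (f' x) x)
    (hLip : ∀ x y, ‖f' x - f' y‖ ≤ L * ‖x - y‖) (x y : E) :
    f y ≤ f x + ⟪f' x, y - x⟫ + L / 2 * ‖y - x‖ ^ 2 := by
  set d := y - x
  let φ : ℝ → ℝ := fun s => f (x + s • d) - s * ⟪f' x, d⟫ - L / 2 * s ^ 2 * ‖d‖ ^ 2
  have hφ : ∀ s, HasDerivAt φ (⟪f' (x + s • d) - f' x, d⟫ - L * s * ‖d‖ ^ 2) s := by
    intro s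
    have hquad := ((hasDerivAt_pow 2 s).const_mul (L / 2)).mul_const (‖d‖ ^ 2)
    refine (((hasDerivAt_comp_add_smul hf x d s).sub
      ((hasDerivAt_id s).mul_const ⟪f' x, d⟫)).sub hquad).congr_deriv ?_
    rw [inner_sub_left]
    push_cast
    ring
  have hanti : AntitoneOn φ (Set.Icc 0 1) := by
    refine antitoneOn_of_deriv_nonpos (convex_Icc 0 1)
      (fun s _ => (hφ s).continuousAt.continuousWithinAt)
      (fun s _ => (hφ s).differentiableAt.differentiableWithinAt) fun s hs => ?_
    rw [interior_Icc] at hs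
    rw [(hφ s).deriv, sub_nonpos]
    exact inner_gradient_sub_le_of_lipschitz hLip x d hs.1.le
  have h01 := hanti (Set.left_mem_Icc.2 zero_le_one) (Set.right_mem_Icc.2 zero_le_one) zero_le_one
  norm_num [φ, d] at h01
  linarith

theorem le_sub_mul_inner_add_of_lipschitz_gradient (hf : ∀ x, HasGradientAt f (f' x) x)
    (hLip : ∀ x y, ‖f' x - f' y‖ ≤ L * ‖x - y‖) {x p : E} {C : ℝ}
    (hC : L * ‖p - x‖ ^ 2 ≤ C) (μ : ℝ) :
    f (x + μ • (p - x)) ≤ f x - μ * ⟪f' x, x - p⟫ + C / 2 * μ ^ 2 := by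
  have h := le_add_inner_add_of_lipschitz_gradient hf hLip x (x + μ • (p - x))
  have hquad : L / 2 * ‖μ • (p - x)‖ ^ 2 ≤ C / 2 * μ ^ 2 := by
    rw [norm_smul, mul_pow, Real.norm_eq_abs, sq_abs]
    nlinarith [sq_nonneg μ]
  have hinner : ⟪f' x, p - x⟫ = -⟪f' x, x - p⟫ := by rw [← inner_neg_right, neg_sub]
  rw [add_sub_cancel_left, real_inner_smul_right, hinner] at h
  linarith

end Smooth

/-- The decrease guaranteed by one short Frank–Wolfe step with dual gap `g` and curvature
constant `C`. -/
noncomputable def shortStepDecrease (C g : ℝ) : ℝ := min (g ^ 2 / (2 * C)) (g / 2)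

theorem shortStepDecrease_le (C g : ℝ) (hC : 0 < C) :
    shortStepDecrease C g ≤ min (g / C) 1 * g - C / 2 * min (g / C) 1 ^ 2 := by
  rcases le_or_gt g C with hgC | hCg
  · rw [min_eq_left ((div_le_one hC).2 hgC)]
    refine (min_le_left _ _).trans (le_of_eq ?_)
    field_simp
    ring
  · rw [min_eq_right ((one_le_div hC).2 hCg.le)]
    refine (min_le_right _ _).trans ?_
    linarith

theorem shortStepDecrease_monotoneOn {C : ℝ} (hC : 0 < C) :
    MonotoneOn (shortStepDecrease C) (Set.Ici 0) := fun a ha b _ hab => by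
  unfold shortStepDecrease
  gcongr

theorem mul_shortStepDecrease_inf'_le_sum {C : ℝ} (hC : 0 < C) {g : ℕ → ℝ} (hg : ∀ t, 0 ≤ g t)
    (T : ℕ) :
    ((T : ℝ) + 1) * shortStepDecrease C ((range (T + 1)).inf' nonempty_range_add_one g) ≤
      ∑ t ∈ range (T + 1), shortStepDecrease C (g t) := by
  have := card_nsmul_le_sum (range (T + 1)) (fun t => shortStepDecrease C (g t)) _ fun t ht =>
    shortStepDecrease_monotoneOn hC (le_inf' nonempty_range_add_one g fun t _ => hg t) (hg t)
      (inf'_le g ht)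
  simpa [card_range] using this

theorem sum_range_le_sub_of_add_le {a d : ℕ → ℝ} (h : ∀ t, a (t + 1) + d t ≤ a t) (T : ℕ) :
    ∑ t ∈ range T, d t ≤ a 0 - a T :=
  calc _ ≤ ∑ t ∈ range T, (a t - a (t + 1)) := sum_le_sum fun t _ => by linarith [h t]
    _ = a 0 - a T := sum_range_sub' _ _

theorem le_max_div_sqrt_of_mul_shortStepDecrease_le {C G N h : ℝ} (hC : 0 < C) (hG : 0 ≤ G)
    (hN : 1 ≤ N) (hdec : N * shortStepDecrease C G ≤ h) :
    G ≤ max (2 * h) C / √N := by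
  set M := max (2 * h) C
  have hM : 2 * h ≤ M ∧ C ≤ M := ⟨le_max_left _ _, le_max_right _ _⟩
  have hsqrt : √N ^ 2 = N := Real.sq_sqrt (by linarith)
  have hsqrt1 : 1 ≤ √N := Real.one_le_sqrt.2 hN
  rw [le_div_iff₀ (by positivity)]
  rcases min_cases (G ^ 2 / (2 * C)) (G / 2) with ⟨hmin, _⟩ | ⟨hmin, _⟩ <;>
    rw [shortStepDecrease, hmin] at hdec
  · have hsq : (G * √N) ^ 2 ≤ M ^ 2 := by
      have hGN : G ^ 2 * N ≤ 2 * C * h := by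
        rw [mul_div_assoc', div_le_iff₀ (by positivity)] at hdec
        linarith
      nlinarith
    exact (pow_le_pow_iff_left₀ (by positivity) (by linarith) two_ne_zero).1 hsq
  · nlinarith [mul_le_mul_of_nonneg_left hsqrt1 (mul_nonneg hG (zero_le_one.trans hsqrt1))]

theorem frank_wolfe_nonconvex_dual_gap_rate_general {E : Type*} [NormedAddCommGroup E]
    [InnerProductSpace ℝ E] [CompleteSpace E]
    (n : ℝ) (hn : 0 < n) (Ω : Set E) (hΩ : Convex ℝ Ω)
    (hdiam : ∀ x ∈ Ω, ∀ y ∈ Ω, ‖x - y‖ ^ 2 ≤ 2 * n)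
    (f : E → ℝ) (f' : E → E) (hf : ∀ x, HasGradientAt f (f' x) x)
    (L : ℝ) (hL : 0 < L) (hLip : ∀ x y, ‖f' x - f' y‖ ≤ L * ‖x - y‖)
    (Fstar : E) (hopt : ∀ P ∈ Ω, f Fstar ≤ f P)
    (F P : ℕ → E) (g μ : ℕ → ℝ) (hF0 : F 0 ∈ Ω)
    (hP : ∀ t, P t ∈ Ω)
    (hPmin : ∀ t, ∀ Q ∈ Ω, ⟪f' (F t), P t⟫ ≤ ⟪f' (F t), Q⟫)
    (hg : ∀ t, g t = ⟪f' (F t), F t - P t⟫)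
    (hμ : ∀ t, μ t = min (g t / (2 * L * n)) 1)
    (hupd : ∀ t : ℕ, F (t + 1) = F t + μ t • (P t - F t)) :
    ∀ T : ℕ, (Finset.range (T + 1)).inf' Finset.nonempty_range_add_one g ≤
      max (2 * (f (F 0) - f Fstar)) (2 * n * L) / Real.sqrt ((T : ℝ) + 1) := by
  have hC : 0 < 2 * n * L := by positivity
  have hgap_of_mem : ∀ t, F t ∈ Ω → 0 ≤ g t := fun t ht => by
    rw [hg, inner_sub_right, sub_nonneg]
    exact hPmin t _ ht
  have hmem : ∀ t, F t ∈ Ω := fun t => by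
    induction t with
    | zero => exact hF0
    | succ t ih =>
      rw [hupd, hμ]
      exact hΩ.add_smul_sub_mem ih (hP t)
        ⟨le_min (div_nonneg (hgap_of_mem t ih) (by positivity)) zero_le_one, min_le_right _ _⟩
  have hstep : ∀ t, f (F (t + 1)) + shortStepDecrease (2 * n * L) (g t) ≤ f (F t) := fun t => by
    have hcurv : L * ‖P t - F t‖ ^ 2 ≤ 2 * n * L := by
      nlinarith [hdiam _ (hP t) _ (hmem t)]
    have hdesc := le_sub_mul_inner_add_of_lipschitz_gradient hf hLip hcurv (μ t)
    rw [← hg, hμ, mul_right_comm 2 L n] at hdesc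
    rw [hupd, hμ, mul_right_comm 2 L n]
    linarith [shortStepDecrease_le (2 * n * L) (g t) hC]
  have hgap : ∀ t, 0 ≤ g t := fun t => hgap_of_mem t (hmem t)
  intro T
  have htotal := (sum_range_le_sub_of_add_le (a := fun t => f (F t)) hstep (T + 1)).trans
    (sub_le_sub_left (hopt _ (hmem (T + 1))) _)
  exact le_max_div_sqrt_of_mul_shortStepDecrease_le hC (le_inf' _ _ fun t _ => hgap t)
    (by linarith [T.cast_nonneg (α := ℝ)])
    ((mul_shortStepDecrease_inf'_le_sum hC hgap T).trans htotal)

/-- Frank–Wolfe for (possibly nonconvex) `L`-smooth objectives: the minimal dual gap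
over the first `T+1` iterations decays at rate `O(1/√T)`. -/
theorem frank_wolfe_nonconvex_dual_gap_rate {E : Type*} [NormedAddCommGroup E]
    [InnerProductSpace ℝ E] [CompleteSpace E]
    (n : ℝ) (hn : 0 < n) (Ω : Set E) (hne : Ω.Nonempty) (hΩ : Convex ℝ Ω)
    (hdiam : ∀ x ∈ Ω, ∀ y ∈ Ω, ‖x - y‖ ^ 2 ≤ 2 * n)
    (f : E → ℝ) (f' : E → E) (hf : ∀ x, HasGradientAt f (f' x) x)
    (L : ℝ) (hL : 0 < L) (hLip : ∀ x y, ‖f' x - f' y‖ ≤ L * ‖x - y‖)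
    (Fstar : E) (hFstar : Fstar ∈ Ω) (hopt : ∀ P ∈ Ω, f Fstar ≤ f P)
    (F P : ℕ → E) (g μ : ℕ → ℝ) (hF0 : F 0 ∈ Ω)
    (hP : ∀ t, P t ∈ Ω)
    (hPmin : ∀ t, ∀ Q ∈ Ω, ⟪f' (F t), P t⟫ ≤ ⟪f' (F t), Q⟫)
    (hg : ∀ t, g t = ⟪f' (F t), F t - P t⟫)
    (hμ : ∀ t, μ t = min (g t / (2 * L * n)) 1)
    (hupd : ∀ t : ℕ, F (t + 1) = F t + μ t • (P t - F t)) :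
    ∀ T : ℕ, (Finset.range (T + 1)).inf' Finset.nonempty_range_add_one g ≤
      max (2 * (f (F 0) - f Fstar)) (2 * n * L) / Real.sqrt ((T : ℝ) + 1) :=
  frank_wolfe_nonconvex_dual_gap_rate_general n hn Ω hΩ hdiam f f' hf L hL hLip Fstar hopt F P g μ
    hF0 hP hPmin hg hμ hupd
end
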